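/- arXiv:2112.02253 — 2 statements merged into one kernel-verified Lean document; each statement's English description precedes it below -/
import Mathlib

section
/- Let n ≥ 3 and let P_n be the path graph on vertex set Fin n. Then Σ_{S ⊆ Fin n, S ≠ ∅} (−1)^{|S|−1} H₀(P_n[S]) = 0, where the sum is over all nonempty vertex subsets. (This is the vanishing of the connectivity count C^N, and hence of the N-partite information, for an open chain of N = n subsystems.) -/
/-!
The connected components of `P_n[S]` are the maximal runs of consecutive vertices of `S`, so
`H₀(P_n[S])` is the number of run starts: the `i ∈ S` with `i - 1 ∉ S`. Exchanging the sums, a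
vertex `i` contributes the alternating sum of `(-1)^(|S|-1)` over the sets `S` with `i ∈ S` and
`i - 1 ∉ S`, that is, over the Boolean interval `[{i}, V ∖ {i - 1}]`. For `n ≥ 3` this interval is
not a single point, so the alternating sum vanishes.
-/

/-- For a simple graph `G` and a set of vertices `S`, the number of connected
components of the induced subgraph `G[S]`. -/
noncomputable def H0 {V : Type*} (G : SimpleGraph V) (S : Set V) : ℕ :=
  Nat.card (G.induce S).ConnectedComponent

open SimpleGraph Finset

namespace Finset

theorem sum_Icc_neg_one_pow_card {α : Type*} [DecidableEq α] {s t : Finset α} (h : s ⊂ t) :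
    ∑ u ∈ Icc s t, (-1 : ℤ) ^ #u = 0 := by
  have hdisj {v} (hv : v ∈ (t \ s).powerset) : Disjoint s v :=
    disjoint_of_subset_right (mem_powerset.mp hv) disjoint_sdiff
  rw [Icc_eq_image_powerset h.subset, sum_image fun v hv w hw hvw => by
    rw [← union_sdiff_cancel_left (hdisj hv), hvw, union_sdiff_cancel_left (hdisj hw)]]
  calc ∑ v ∈ (t \ s).powerset, (-1 : ℤ) ^ #(s ∪ v)
      = ∑ v ∈ (t \ s).powerset, (-1 : ℤ) ^ #s * (-1) ^ #v :=
        sum_congr rfl fun v hv => by rw [card_union_of_disjoint (hdisj hv), pow_add]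
    _ = 0 := by
        rw [← mul_sum, sum_powerset_neg_one_pow_card_of_nonempty
          (sdiff_nonempty.mpr (not_subset_of_ssubset h)), mul_zero]

theorem sum_Icc_neg_one_pow_card_sub_one {α : Type*} [DecidableEq α] {s t : Finset α}
    (hs : s.Nonempty) (h : s ⊂ t) : ∑ u ∈ Icc s t, (-1 : ℤ) ^ (#u - 1) = 0 := by
  have hsign : ∀ u ∈ Icc s t, (-1 : ℤ) ^ (#u - 1) = -(-1) ^ #u := fun u hu => by
    obtain ⟨k, hk⟩ := Nat.exists_eq_succ_of_ne_zero
      (hs.mono (mem_Icc.mp hu).1).card_pos.ne'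
    rw [hk, Nat.succ_sub_one, pow_succ, mul_neg_one, neg_neg]
  rw [sum_congr rfl hsign, sum_neg_distrib, sum_Icc_neg_one_pow_card h, neg_zero]

theorem sum_mul_card_eq_sum_sum_filter {ι α R : Type*} [Fintype α] [DecidableEq α]
    [NonAssocSemiring R] (s : Finset ι) (f : ι → Finset α) (w : ι → R) :
    ∑ x ∈ s, w x * #(f x) = ∑ i, ∑ x ∈ s with i ∈ f x, w x := by
  calc ∑ x ∈ s, w x * #(f x) = ∑ x ∈ s, ∑ i, if i ∈ f x then w x else 0 := by
        refine sum_congr rfl fun x _ => ?_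
        rw [sum_ite_mem, univ_inter, sum_const, nsmul_eq_mul']
    _ = ∑ i, ∑ x ∈ s with i ∈ f x, w x := by
        rw [sum_comm]
        exact sum_congr rfl fun i _ => (sum_filter _ _).symm

end Finset

variable {n : ℕ}

def runStarts (S : Finset (Fin n)) : Finset (Fin n) :=
  S.filter fun i => ∀ j ∈ S, j.val + 1 ≠ i.val

lemma mem_of_walk_induce_pathGraph {S : Set (Fin n)} {u v : S}
    (w : ((pathGraph n).induce S).Walk u v) {x : Fin n} (hux : u.1 ≤ x) (hxv : x ≤ v.1) :
    x ∈ S := by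
  induction w with
  | @nil a => exact le_antisymm hxv hux ▸ a.2
  | @cons a b _ hab _ ih =>
    obtain rfl | hax := eq_or_ne x a
    · exact a.2
    · rw [comap_adj, Function.Embedding.coe_subtype, pathGraph_adj] at hab
      have := Fin.val_ne_of_ne hax
      exact ih (by rw [Fin.le_iff_val_le_val] at hux ⊢; omega) hxv

lemma eq_of_reachable_of_mem_runStarts {S : Finset (Fin n)} {u v : (S : Set (Fin n))}
    (hu : u.1 ∈ runStarts S) (hv : v.1 ∈ runStarts S)
    (huv : ((pathGraph n).induce (S : Set (Fin n))).Reachable u v) : u = v := by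
  wlog hle : u.1 ≤ v.1 generalizing u v
  · exact (this hv hu huv.symm (le_of_not_ge hle)).symm
  obtain ⟨w⟩ := huv
  by_contra hne
  have hlt : u.1.val < v.1.val := lt_of_le_of_ne hle fun h => hne (Subtype.ext (Fin.ext h))
  have hpred : (⟨v.1.val - 1, by omega⟩ : Fin n) ∈ (S : Set (Fin n)) :=
    mem_of_walk_induce_pathGraph w (Fin.le_iff_val_le_val.mpr (by simp; omega))
      (Fin.le_iff_val_le_val.mpr (by simp))
  exact (mem_filter.mp hv).2 _ hpred (by simp; omega)

lemma exists_mem_runStarts_reachable {S : Finset (Fin n)} (v : (S : Set (Fin n))) :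
    ∃ u : (S : Set (Fin n)), u.1 ∈ runStarts S ∧
      ((pathGraph n).induce (S : Set (Fin n))).Reachable u v := by
  obtain ⟨v, hv⟩ := v
  induction v using WellFoundedLT.induction with
  | _ v ih =>
  by_cases hstart : v ∈ runStarts S
  · exact ⟨⟨v, hv⟩, hstart, .rfl⟩
  · obtain ⟨j, hj, hjv⟩ : ∃ j ∈ S, j.val + 1 = v.val := by
      simp only [runStarts, mem_filter, not_and, not_forall, not_not, exists_prop] at hstart
      exact hstart hv
    obtain ⟨u, hu, huj⟩ := ih j (by rw [Fin.lt_def]; omega) hj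
    have hadj : ((pathGraph n).induce (S : Set (Fin n))).Adj ⟨j, hj⟩ ⟨v, hv⟩ := by
      simp [pathGraph_adj, hjv]
    exact ⟨u, hu, huj.trans hadj.reachable⟩

theorem H0_pathGraph (S : Finset (Fin n)) : H0 (pathGraph n) S = #(runStarts S) := by
  rw [H0, ← Nat.card_eq_finsetCard]
  refine (Nat.card_eq_of_bijective
    (fun i : runStarts S => connectedComponentMk _ ⟨i.1, (mem_filter.mp i.2).1⟩) ⟨?_, ?_⟩).symm
  · rintro ⟨i, hi⟩ ⟨j, hj⟩ hij
    simpa using eq_of_reachable_of_mem_runStarts hi hj (ConnectedComponent.eq.mp hij)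
  · intro c
    obtain ⟨v, rfl⟩ := c.exists_rep
    obtain ⟨u, hu, huv⟩ := exists_mem_runStarts_reachable v
    exact ⟨⟨u.1, hu⟩, ConnectedComponent.eq.mpr huv⟩

lemma filter_mem_runStarts_eq_Icc (i : Fin n) :
    {S ∈ (univ : Finset (Fin n)).powerset.filter (· ≠ ∅) | i ∈ runStarts S} =
      Icc {i} ({j | j.val + 1 ≠ i.val} : Finset (Fin n)) := by
  ext S
  simp only [runStarts, mem_filter, mem_powerset, subset_univ, true_and, mem_Icc,
    singleton_subset_iff]
  rw [subset_iff]
  simp only [mem_filter, mem_univ, true_and]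
  exact ⟨fun ⟨_, hi, hpred⟩ => ⟨hi, hpred⟩, fun ⟨hi, hpred⟩ => ⟨ne_empty_of_mem hi, hi, hpred⟩⟩

lemma singleton_ssubset_filter_succ_ne (hn : 3 ≤ n) (i : Fin n) :
    {i} ⊂ ({j | j.val + 1 ≠ i.val} : Finset (Fin n)) := by
  refine (ssubset_iff_of_subset (by simp)).mpr
    ⟨⟨if i.val ≤ 1 then 2 else 0, by split <;> omega⟩, ?_⟩
  simp only [mem_filter, mem_univ, true_and, mem_singleton, ne_eq, Fin.ext_iff]
  split <;> omega

/-- For an open chain of `N = n ≥ 3` subsystems (the path graph `P_n`), the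
connectivity count `Σ_{S ≠ ∅} (-1)^(|S|-1) H₀(P_n[S])` vanishes. -/
theorem connectivity_count_open_chain (n : ℕ) (hn : 3 ≤ n) :
    ∑ S ∈ (Finset.univ : Finset (Fin n)).powerset.filter (· ≠ ∅),
      (-1 : ℤ) ^ (S.card - 1) * (H0 (SimpleGraph.pathGraph n) (↑S : Set (Fin n)) : ℤ)
    = 0 := by
  simp only [H0_pathGraph]
  rw [sum_mul_card_eq_sum_sum_filter]
  refine sum_eq_zero fun i _ => ?_
  rw [filter_mem_runStarts_eq_Icc]
  exact sum_Icc_neg_one_pow_card_sub_one (singleton_nonempty i)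
    (singleton_ssubset_filter_succ_ne hn i)
end

section
/- Let n ≥ 3, let C_n be the cycle graph on vertex set Fin n, and let S be a nonempty proper subset of Fin n. Then the number of connected components of the induced subgraph C_n[S] equals the number of elements i ∈ S such that i+1 mod n ∉ S. (Every proper induced subgraph of a cycle graph is a disjoint union of arcs, one for each maximal cyclic run of consecutive vertices in S.) -/
/-! Since `S` misses a vertex, walking forward `i ↦ i + 1` from any `v ∈ S` eventually leaves
`S`; let `runEnd v` be the last vertex reached inside `S`. This map is constant along edges,
`v` is connected to `runEnd v`, and its fixed points are exactly the `i ∈ S` with `i + 1 ∉ S`,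
so these vertices represent the components, one each. The argument only uses that the graph is
that of a self-map all of whose forward orbits leave `S`. -/

open Function SimpleGraph

variable {V : Type*}

namespace SimpleGraph

theorem Reachable.eq_of_forall_adj_eq {β : Type*} {G : SimpleGraph V} {f : V → β}
    (hf : ∀ u v, G.Adj u v → f u = f v) {u v : V} (h : G.Reachable u v) : f u = f v := by
  rw [reachable_iff_reflTransGen] at h
  induction h with
  | refl => rfl
  | tail _ hadj ih => exact ih.trans (hf _ _ hadj)

def connectedComponentEquivOfSection {T : Type*} (G : SimpleGraph V) (f : V → T) (g : T → V)
    (hf : ∀ u v, G.Adj u v → f u = f v) (hfg : LeftInverse f g)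
    (hgf : ∀ v, G.Reachable v (g (f v))) : G.ConnectedComponent ≃ T where
  toFun := ConnectedComponent.lift f fun _ _ p _ => Reachable.eq_of_forall_adj_eq hf ⟨p⟩
  invFun t := G.connectedComponentMk (g t)
  left_inv := ConnectedComponent.ind fun v => ConnectedComponent.sound (hgf v).symm
  right_inv := hfg

def functionalGraph (σ : V → V) : SimpleGraph V := fromRel fun u w => w = σ u

theorem functionalGraph_adj {σ : V → V} {u v : V} :
    (functionalGraph σ).Adj u v ↔ u ≠ v ∧ (v = σ u ∨ u = σ v) :=
  fromRel_adj _ _ _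

theorem cycleGraph_eq_functionalGraph (k : ℕ) :
    cycleGraph (k + 2) = functionalGraph (· + 1) := by
  ext u v
  rw [cycleGraph_adj, functionalGraph_adj, sub_eq_iff_eq_add', sub_eq_iff_eq_add']
  constructor
  · rintro (h | h) <;> refine ⟨?_, by tauto⟩ <;> rintro rfl <;> simp at h
  · exact fun h => h.2.symm

end SimpleGraph

open Fin.NatCast in
theorem Fin.exists_iterate_add_one_notMem {n : ℕ} [NeZero n] {S : Set (Fin n)}
    (hS : S ≠ Set.univ) (v : Fin n) : ∃ m, (· + 1)^[m] v ∉ S := by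
  obtain ⟨u, hu⟩ := (Set.ne_univ_iff_exists_notMem S).1 hS
  refine ⟨(u - v).val, ?_⟩
  rwa [add_right_iterate_apply, nsmul_one, Fin.cast_val_eq_self, add_sub_cancel]

section Runs

open scoped Classical

variable {σ : V → V} {S : Set V}

theorem exists_iterate_succ_notMem (hexit : ∀ v, ∃ m, σ^[m] v ∉ S) (v : V) :
    ∃ m, σ^[m + 1] v ∉ S :=
  (hexit (σ v)).imp fun _ h => by rwa [iterate_succ_apply]

variable (hexit : ∀ v, ∃ m, σ^[m] v ∉ S)

noncomputable def runLength (v : V) : ℕ := Nat.find (exists_iterate_succ_notMem hexit v)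

noncomputable def runEnd (v : V) : V := σ^[runLength hexit v] v

theorem iterate_mem_of_le_runLength {v : V} (hv : v ∈ S) {j : ℕ} (hj : j ≤ runLength hexit v) :
    σ^[j] v ∈ S := by
  cases j with
  | zero => exact hv
  | succ j => exact not_not.1 (Nat.find_min (exists_iterate_succ_notMem hexit v) hj)

theorem runEnd_mem {v : V} (hv : v ∈ S) : runEnd hexit v ∈ S :=
  iterate_mem_of_le_runLength hexit hv le_rfl

theorem apply_runEnd_notMem (v : V) : σ (runEnd hexit v) ∉ S := by
  rw [runEnd, ← iterate_succ_apply' σ]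
  exact Nat.find_spec (exists_iterate_succ_notMem hexit v)

theorem runEnd_eq_self {v : V} (hv : σ v ∉ S) : runEnd hexit v = v := by
  have : runLength hexit v = 0 := Nat.find_eq_zero _ |>.2 hv
  rw [runEnd, this, iterate_zero_apply]

theorem runEnd_apply {v : V} (hv : σ v ∈ S) : runEnd hexit (σ v) = runEnd hexit v := by
  have : runLength hexit v = runLength hexit (σ v) + 1 :=
    Nat.find_comp_succ _ (exists_iterate_succ_notMem hexit (σ v)) (not_not.2 hv)
  rw [runEnd, runEnd, this, iterate_succ_apply]

end Runs

section FunctionalGraph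

variable {σ : V → V} {S : Set V}

theorem reachable_induce_functionalGraph_of_eq_apply {x y : S} (h : y.1 = σ x.1) :
    ((functionalGraph σ).induce S).Reachable x y := by
  by_cases hxy : x = y
  · exact hxy ▸ .refl x
  · refine Adj.reachable ?_
    rw [induce_adj, functionalGraph_adj]
    exact ⟨fun h' => hxy (Subtype.ext h'), .inl h⟩

variable (hexit : ∀ v, ∃ m, σ^[m] v ∉ S)

theorem reachable_runEnd {v : V} (hv : v ∈ S) :
    ((functionalGraph σ).induce S).Reachable ⟨v, hv⟩ ⟨runEnd hexit v, runEnd_mem hexit hv⟩ := by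
  suffices ∀ j (hj : j ≤ runLength hexit v), ((functionalGraph σ).induce S).Reachable
      ⟨v, hv⟩ ⟨σ^[j] v, iterate_mem_of_le_runLength hexit hv hj⟩ from this _ le_rfl
  intro j hj
  induction j with
  | zero => rfl
  | succ j ih =>
    exact (ih (by omega)).trans <|
      reachable_induce_functionalGraph_of_eq_apply (iterate_succ_apply' σ j v)

noncomputable def connectedComponentEquivExits :
    ((functionalGraph σ).induce S).ConnectedComponent ≃ {v // v ∈ S ∧ σ v ∉ S} :=
  connectedComponentEquivOfSection _
    (fun v => ⟨runEnd hexit v, runEnd_mem hexit v.2, apply_runEnd_notMem hexit v⟩)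
    (fun t => ⟨t, t.2.1⟩)
    (fun x y hxy => by
      rw [induce_adj, functionalGraph_adj] at hxy
      obtain ⟨-, hyx | hxy⟩ := hxy
      · simp only [hyx, runEnd_apply hexit (hyx ▸ y.2)]
      · simp only [hxy, runEnd_apply hexit (hxy ▸ x.2)])
    (fun t => Subtype.ext (runEnd_eq_self hexit t.2.2))
    (fun v => reachable_runEnd hexit v.2)

end FunctionalGraph

/-- Every proper induced subgraph of the cycle graph `C_n` is a disjoint union of
arcs, one for each maximal cyclic run of consecutive vertices: for a nonempty
proper subset `S ⊆ Fin n` (`n ≥ 3`), the number of connected components of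
`C_n[S]` equals the number of `i ∈ S` with `i + 1 (mod n) ∉ S`. -/
theorem cycleGraph_induced_components (n : ℕ) (hn : 3 ≤ n)
    (S : Finset (Fin n)) (hS' : S ≠ Finset.univ) :
    Nat.card ((SimpleGraph.cycleGraph n).induce (↑S : Set (Fin n))).ConnectedComponent
      = (S.filter (fun i : Fin n => i + (⟨1, by omega⟩ : Fin n) ∉ S)).card := by
  obtain ⟨k, rfl⟩ : ∃ k, n = k + 2 := ⟨n - 2, by omega⟩
  have hexit := Fin.exists_iterate_add_one_notMem (S := (S : Set (Fin (k + 2))))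
    (by exact_mod_cast hS')
  rw [cycleGraph_eq_functionalGraph, Nat.card_congr (connectedComponentEquivExits hexit),
    ← Nat.card_eq_finsetCard]
  simp only [Finset.mem_coe, Finset.mem_filter]
  rfl
end
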